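/- arXiv:2407.17736 — 4 statements merged into one kernel-verified Lean document; each statement's English description precedes it below -/
import Mathlib

section
/- Let A(w) denote the symmetric matrix A_{ij}(w) = w·w_{ij} − (1/2)|∇w|²δ_{ij} for a positive C² function w. If u, v are positive C² functions on Ω, then A(u+v) = (u+v)u⁻¹·A(u) + (u+v)v⁻¹·A(v) + (1/2)(v u⁻¹|∇u|² + u v⁻¹|∇v|² − 2∇u·∇v)·Id, and the scalar coefficient of Id is nonnegative. -/
open scoped BigOperators Classical
open MeasureTheory

noncomputable section

abbrev E (n : ℕ) := EuclideanSpace ℝ (Fin n)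

/-- k-th elementary symmetric polynomial of a vector in ℝⁿ. -/
def esymm (n k : ℕ) (lam : Fin n → ℝ) : ℝ :=
  ∑ s ∈ Finset.univ.powersetCard k, ∏ i ∈ s, lam i

/-- Eigenvalue vector of a real symmetric matrix (junk value 0 otherwise). -/
def eigs {n : ℕ} (M : Matrix (Fin n) (Fin n) ℝ) : Fin n → ℝ :=
  if h : M.IsHermitian then h.eigenvalues else 0

/-- σ_k of the eigenvalues of a symmetric matrix. -/
def Sk (n k : ℕ) (M : Matrix (Fin n) (Fin n) ℝ) : ℝ := esymm n k (eigs M)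

/-- The (closed) Gårding cone Γ_k. -/
def GammaK (n k : ℕ) : Set (Fin n → ℝ) :=
  {lam | ∀ i, 1 ≤ i → i ≤ k → 0 ≤ esymm n i lam}

/-- i-th partial derivative. -/
def pd {n : ℕ} (u : E n → ℝ) (i : Fin n) (x : E n) : ℝ :=
  fderiv ℝ u x (EuclideanSpace.single i 1)

/-- Hessian matrix. -/
def hess {n : ℕ} (u : E n → ℝ) (x : E n) : Matrix (Fin n) (Fin n) ℝ :=
  Matrix.of fun i j => pd (fun y => pd u j y) i x

/-- |∇u|². -/
def gradsq {n : ℕ} (u : E n → ℝ) (x : E n) : ℝ := ∑ i, (pd u i x) ^ 2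

/-- The conformal Schouten-type matrix A_{ij}(u) = u u_{ij} - (1/2)|∇u|² δ_{ij}. -/
def Amat {n : ℕ} (u : E n → ℝ) (x : E n) : Matrix (Fin n) (Fin n) ℝ :=
  Matrix.of fun i j => u x * hess u x i j - (1 / 2) * gradsq u x * (if i = j then 1 else 0)

/-!
Everything is pointwise algebra once one knows that first and second partial derivatives are
additive. The identity then amounts to splitting `(u + v) u_{ij} = (u + v) u⁻¹ · u u_{ij}` and
`|∇(u+v)|² = |∇u|² + |∇v|² + 2 ∇u·∇v`, and the coefficient of `Id` is nonnegative because,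
coordinatewise, `v u⁻¹ p² + u v⁻¹ q² - 2 p q = (v p - u q)² / (u v)`.
-/

section

variable {n : ℕ} {u v : E n → ℝ} {x : E n}

lemma pd_add (hu : DifferentiableAt ℝ u x) (hv : DifferentiableAt ℝ v x) (j : Fin n) :
    pd (fun y => u y + v y) j x = pd u j x + pd v j x := by
  rw [pd, fderiv_fun_add hu hv]
  rfl

lemma ContDiffAt.differentiableAt_pd (hu : ContDiffAt ℝ 2 u x) (j : Fin n) :
    DifferentiableAt ℝ (fun y => pd u j y) x :=
  ((hu.fderiv_right (m := 1) (by norm_num)).differentiableAt (by norm_num)).clm_apply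
    (differentiableAt_const _)

lemma hess_add (hu : ContDiffAt ℝ 2 u x) (hv : ContDiffAt ℝ 2 v x) :
    hess (fun y => u y + v y) x = hess u x + hess v x := by
  have hpd : ∀ j, (fun y => pd (fun z => u z + v z) j y) =ᶠ[nhds x]
      fun y => pd u j y + pd v j y := fun j => by
    filter_upwards [hu.eventually (by simp), hv.eventually (by simp)] with y huy hvy
    exact pd_add (huy.differentiableAt (by norm_num)) (hvy.differentiableAt (by norm_num)) j
  ext i j
  change fderiv ℝ (fun y => pd (fun z => u z + v z) j y) x _ = _
  rw [(hpd j).fderiv_eq, fderiv_fun_add (hu.differentiableAt_pd j) (hv.differentiableAt_pd j)]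
  rfl

lemma gradsq_add (hu : DifferentiableAt ℝ u x) (hv : DifferentiableAt ℝ v x) :
    gradsq (fun y => u y + v y) x = gradsq u x + gradsq v x + 2 * ∑ i, pd u i x * pd v i x := by
  simp only [gradsq, pd_add hu hv, add_sq, Finset.sum_add_distrib, Finset.mul_sum]
  ring_nf

lemma Amat_add (hu : ContDiffAt ℝ 2 u x) (hv : ContDiffAt ℝ 2 v x) (hux : u x ≠ 0)
    (hvx : v x ≠ 0) :
    Amat (fun y => u y + v y) x =
      ((u x + v x) * (u x)⁻¹) • Amat u x + ((u x + v x) * (v x)⁻¹) • Amat v x +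
        ((1 / 2) * (v x * (u x)⁻¹ * gradsq u x + u x * (v x)⁻¹ * gradsq v x
            - 2 * ∑ i, pd u i x * pd v i x)) • (1 : Matrix (Fin n) (Fin n) ℝ) := by
  ext i j
  simp only [Amat, hess_add hu hv,
    gradsq_add (hu.differentiableAt (by norm_num)) (hv.differentiableAt (by norm_num)),
    Matrix.add_apply, Matrix.smul_apply, Matrix.one_apply, Matrix.of_apply, smul_eq_mul]
  field_simp
  ring

end

lemma weighted_sum_sq_sub_two_mul_nonneg {ι : Type*} (s : Finset ι) {a b : ℝ} (ha : 0 < a)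
    (hb : 0 < b) (p q : ι → ℝ) :
    0 ≤ b * a⁻¹ * ∑ i ∈ s, p i ^ 2 + a * b⁻¹ * ∑ i ∈ s, q i ^ 2 - 2 * ∑ i ∈ s, p i * q i := by
  have hsq : ∀ i, b * a⁻¹ * p i ^ 2 + a * b⁻¹ * q i ^ 2 - 2 * (p i * q i) =
      (b * p i - a * q i) ^ 2 / (a * b) := fun i => by
    field_simp
    ring
  simp only [Finset.mul_sum, ← Finset.sum_add_distrib, ← Finset.sum_sub_distrib, hsq]
  exact Finset.sum_nonneg fun i _ => by positivity

theorem stmt1 (n : ℕ) (Ω : Set (E n)) (hΩ : IsOpen Ω) (u v : E n → ℝ)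
    (hu : ContDiffOn ℝ 2 u Ω) (hv : ContDiffOn ℝ 2 v Ω)
    (hupos : ∀ x ∈ Ω, 0 < u x) (hvpos : ∀ x ∈ Ω, 0 < v x) :
    ∀ x ∈ Ω,
      Amat (fun y => u y + v y) x =
        ((u x + v x) * (u x)⁻¹) • Amat u x + ((u x + v x) * (v x)⁻¹) • Amat v x +
          ((1 / 2) * (v x * (u x)⁻¹ * gradsq u x + u x * (v x)⁻¹ * gradsq v x
              - 2 * ∑ i, pd u i x * pd v i x)) • (1 : Matrix (Fin n) (Fin n) ℝ) ∧
      0 ≤ v x * (u x)⁻¹ * gradsq u x + u x * (v x)⁻¹ * gradsq v x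
          - 2 * ∑ i, pd u i x * pd v i x := by
  intro x hx
  have hux := hu.contDiffAt (hΩ.mem_nhds hx)
  have hvx := hv.contDiffAt (hΩ.mem_nhds hx)
  exact ⟨Amat_add hux hvx (hupos x hx).ne' (hvpos x hx).ne',
    weighted_sum_sq_sub_two_mul_nonneg _ (hupos x hx) (hvpos x hx) _ _⟩
end
end

section
/- For real numbers λ₁,…,λₙ and any real numbers v > 0 and b, the k-th elementary symmetric polynomial of the shifted values (vλ₁ − b, …, vλₙ − b) equals σ_k shifted by binomial-weighted lower terms: σ_k(vλ − b·𝟙) = Σ_{l=0}^{k} (C(k,l)·C(n,k)/C(n,k−l)) · v^{k−l} · σ_{k−l}(λ) · (−b)^{l}, where C(·,·) are binomial coefficients. -/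
open scoped BigOperators Classical
open MeasureTheory

noncomputable section

/-! Expanding `∏ i ∈ s, (μ i + c)` over the subsets `t ⊆ s`, and counting the
`C(n - m, k - m)` sets `s` of size `k` that contain a given `m`-set `t`, gives
`σ_k(μ + c𝟙) = ∑ m, C(n - m, k - m) σ_m(μ) c^(k - m)`. Taking `μ = vλ`, `c = -b`, `m = k - l`,
the coefficient `C(n - k + l, l)` is `C(k, l) C(n, k) / C(n, k - l)` because
`C(n, k) C(k, k - l) = C(n, k - l) C(n - k + l, l)`. -/

open Finset

theorem card_filter_subset_powersetCard {α : Type*} [Fintype α] [DecidableEq α] {t : Finset α}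
    {k : ℕ} (ht : #t ≤ k) :
    #{s ∈ powersetCard k univ | t ⊆ s} = (Fintype.card α - #t).choose (k - #t) := by
  have mem_supersets (s : Finset α) :
      s ∈ (({s ∈ powersetCard k univ | t ⊆ s} : Finset (Finset α)) : Set (Finset α)) ↔
        #s = k ∧ t ⊆ s := by
    simp
  have mem_complements (u : Finset α) :
      u ∈ ((powersetCard (k - #t) tᶜ : Finset (Finset α)) : Set (Finset α)) ↔
        Disjoint u t ∧ #u = k - #t := by
    simp [subset_compl_iff_disjoint_right]
  rw [← card_compl, ← card_powersetCard]
  refine card_nbij' (· \ t) (· ∪ t) ?_ ?_ ?_ ?_ <;> intro s hs <;>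
    simp only [mem_supersets, mem_complements] at hs ⊢
  · exact ⟨sdiff_disjoint, by rw [card_sdiff_of_subset hs.2, hs.1]⟩
  · exact ⟨by rw [card_union_of_disjoint hs.1, hs.2]; omega, subset_union_right⟩
  · exact sdiff_union_of_subset hs.2
  · exact union_sdiff_cancel_right hs.1

theorem sum_powersetCard_sum_powersetCard {α M : Type*} [Fintype α] [DecidableEq α]
    [AddCommMonoid M] {m k : ℕ} (hmk : m ≤ k) (f : Finset α → M) :
    ∑ s ∈ powersetCard k univ, ∑ t ∈ powersetCard m s, f t =
      (Fintype.card α - m).choose (k - m) • ∑ t ∈ powersetCard m univ, f t := by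
  rw [sum_comm' (t' := powersetCard m univ) (s' := fun t => {s ∈ powersetCard k univ | t ⊆ s})]
  · rw [smul_sum]
    refine sum_congr rfl fun t ht => ?_
    rw [sum_const, card_filter_subset_powersetCard ((mem_powersetCard.1 ht).2.trans_le hmk),
      (mem_powersetCard.1 ht).2]
  · intro s t
    simp only [mem_powersetCard, mem_filter, subset_univ, true_and, and_assoc]

theorem esymm_add_const {n : ℕ} (k : ℕ) (μ : Fin n → ℝ) (c : ℝ) :
    esymm n k (fun i => μ i + c) =
      ∑ m ∈ range (k + 1), ((n - m).choose (k - m) : ℝ) * esymm n m μ * c ^ (k - m) := by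
  unfold esymm
  calc ∑ s ∈ powersetCard k univ, ∏ i ∈ s, (μ i + c)
      = ∑ s ∈ powersetCard k univ, ∑ m ∈ range (k + 1),
          ∑ t ∈ powersetCard m s, (∏ i ∈ t, μ i) * c ^ (k - m) := by
        refine sum_congr rfl fun s hs => ?_
        rw [← (mem_powersetCard.1 hs).2, prod_add, sum_powerset]
        refine sum_congr rfl fun m _ => sum_congr rfl fun t ht => ?_
        rw [prod_const, card_sdiff_of_subset (mem_powersetCard.1 ht).1, (mem_powersetCard.1 ht).2]
    _ = ∑ m ∈ range (k + 1), ∑ s ∈ powersetCard k univ,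
          ∑ t ∈ powersetCard m s, (∏ i ∈ t, μ i) * c ^ (k - m) := sum_comm
    _ = _ := by
        refine sum_congr rfl fun m hm => ?_
        rw [sum_powersetCard_sum_powersetCard (Nat.lt_succ_iff.1 (mem_range.1 hm)), ← sum_mul,
          nsmul_eq_mul, Fintype.card_fin, mul_assoc]

theorem esymm_const_mul {n : ℕ} (m : ℕ) (v : ℝ) (μ : Fin n → ℝ) :
    esymm n m (fun i => v * μ i) = v ^ m * esymm n m μ := by
  unfold esymm
  rw [mul_sum]
  refine sum_congr rfl fun s hs => ?_
  rw [prod_mul_distrib, prod_const, (mem_powersetCard.1 hs).2]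

theorem Nat.cast_choose_sub_sub {K : Type*} [Field K] [CharZero K] {n k l : ℕ} (hlk : l ≤ k)
    (hkn : k ≤ n) :
    ((n - (k - l)).choose l : K) = k.choose l * n.choose k / n.choose (k - l) := by
  have hne : (n.choose (k - l) : K) ≠ 0 := by
    exact_mod_cast (Nat.choose_pos ((Nat.sub_le k l).trans hkn)).ne'
  rw [eq_div_iff hne, mul_comm _ (n.choose k : K)]
  have hmul := Nat.choose_mul (n := n) (Nat.sub_le k l)
  rw [Nat.choose_symm hlk, Nat.sub_sub_self hlk] at hmul
  exact_mod_cast (hmul.trans (mul_comm _ _)).symm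

theorem stmt4_general (n k : ℕ) (hkn : k ≤ n) (lam : Fin n → ℝ) (v b : ℝ) :
    esymm n k (fun i => v * lam i - b) =
      ∑ l ∈ Finset.range (k + 1),
        ((k.choose l : ℝ) * (n.choose k : ℝ) / (n.choose (k - l) : ℝ)) *
          v ^ (k - l) * esymm n (k - l) lam * (-b) ^ l := by
  simp_rw [sub_eq_add_neg (v * _) b]
  rw [esymm_add_const, ← sum_range_reflect]
  refine sum_congr rfl fun l hl => ?_
  have hlk : l ≤ k := Nat.lt_succ_iff.1 (mem_range.1 hl)
  rw [Nat.add_sub_cancel, Nat.sub_sub_self hlk, esymm_const_mul, Nat.cast_choose_sub_sub hlk hkn]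
  ring

theorem stmt4 (n k : ℕ) (hkn : k ≤ n) (lam : Fin n → ℝ) (v b : ℝ) (hv : 0 < v) :
    esymm n k (fun i => v * lam i - b) =
      ∑ l ∈ Finset.range (k + 1),
        ((k.choose l : ℝ) * (n.choose k : ℝ) / (n.choose (k - l) : ℝ)) *
          v ^ (k - l) * esymm n (k - l) lam * (-b) ^ l :=
  stmt4_general n k hkn lam v b
end
end

section
/- Let S_m(v) = σ_m(eigenvalues of A(v)) where A_{ij}(v) = v·v_{ij} − (1/2)|∇v|²δ_{ij}, and let σ_m(v) = σ_m(eigenvalues of the Hessian of v). Then pointwise S_k(v) = v^k·σ_k(v) − Σ_{l=1}^{k} [(n−k+l)!/(l!·(n−k)!)]·S_{k−l}(v)·b^l, where b = (1/2)|∇v|². -/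
open scoped BigOperators Classical
open MeasureTheory

noncomputable section

/-!
`A(v) = v D²v - b I`, so the eigenvalues of `A(v)` are `μᵢ = v λᵢ - b`, where `λ` are those of
the Hessian. Hence `v^k σ_k(λ) = σ_k(v λ) = σ_k(μ + b)`, and `σ_k(μ + b)` expands as
`∑ₗ C(n-k+l, l) σ_{k-l}(μ) bˡ`: the coefficients of `∏ (X + μᵢ + b)` are those of the Taylor
shift by `b` of `∏ (X + μᵢ)`. The `l = 0` term is `σ_k(μ) = S_k(v)`.
-/

open Polynomial

namespace esymm

variable {n : ℕ}

lemma eq_multiset_esymm (k : ℕ) (f : Fin n → ℝ) :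
    esymm n k f = (Finset.univ.val.map f).esymm k :=
  (Finset.esymm_map_val f _ k).symm

lemma const_mul (k : ℕ) (c : ℝ) (f : Fin n → ℝ) :
    esymm n k (fun i => c * f i) = c ^ k * esymm n k f := by
  rw [esymm, esymm, Finset.mul_sum]
  refine Finset.sum_congr rfl fun s hs => ?_
  rw [Finset.prod_mul_distrib, Finset.prod_const, (Finset.mem_powersetCard.mp hs).2]

lemma eq_coeff_prod_X_add_C {k : ℕ} (hk : k ≤ n) (f : Fin n → ℝ) :
    esymm n k f = (∏ i, (X + C (f i))).coeff (n - k) := by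
  rw [Finset.prod_X_add_C_coeff _ _ (by simp), Finset.card_univ, Fintype.card_fin,
    Nat.sub_sub_self hk, esymm]

lemma add_const {k : ℕ} (hk : k ≤ n) (f : Fin n → ℝ) (t : ℝ) :
    esymm n k (fun i => f i + t) =
      ∑ l ∈ Finset.range (k + 1), ((n - k + l).choose l : ℝ) * esymm n (k - l) f * t ^ l := by
  set p : ℝ[X] := ∏ i, (X + C (f i))
  have hp : ∏ i, (X + C (f i + t)) = taylor t p := by
    simp only [p, taylor_apply, prod_comp, add_comp, X_comp, C_comp, C_add]
    exact Finset.prod_congr rfl fun i _ => by ring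
  have hdeg : (hasseDeriv (n - k) p).natDegree < k + 1 := by
    have := natDegree_hasseDeriv_le p (n - k)
    have : p.natDegree = n := by
      simp [p, natDegree_prod_of_monic _ _ fun i _ => monic_X_add_C (f i)]
    omega
  rw [eq_coeff_prod_X_add_C hk, hp, taylor_coeff, eval_eq_sum_range' hdeg]
  refine Finset.sum_congr rfl fun l hl => ?_
  have hlk : l ≤ k := Nat.lt_succ_iff.mp (Finset.mem_range.mp hl)
  rw [hasseDeriv_coeff, eq_coeff_prod_X_add_C (k := k - l) (by omega),
    show n - (k - l) = l + (n - k) by omega, add_comm l (n - k), Nat.choose_symm_add]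

end esymm

namespace Matrix.IsHermitian

variable {n : ℕ} {H : Matrix (Fin n) (Fin n) ℝ}

lemma Sk_eq_esymm_eigenvalues (hH : H.IsHermitian) (k : ℕ) :
    Sk n k H = esymm n k hH.eigenvalues := by
  rw [Sk, eigs, dif_pos hH]

lemma Sk_eq_esymm_of_charpoly_eq (hH : H.IsHermitian) {μ : Fin n → ℝ}
    (hμ : H.charpoly = ∏ i, (X - C (μ i))) (k : ℕ) : Sk n k H = esymm n k μ := by
  have hprod : ∏ i, (X - C (μ i)) = ((Finset.univ.val.map μ).map fun a => X - C a).prod := by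
    rw [Multiset.map_map]; rfl
  have hroots : Finset.univ.val.map hH.eigenvalues = Finset.univ.val.map μ := by
    have := hH.roots_charpoly_eq_eigenvalues
    rw [hμ, hprod, roots_multiset_prod_X_sub_C] at this
    simpa using this.symm
  rw [hH.Sk_eq_esymm_eigenvalues, esymm.eq_multiset_esymm, esymm.eq_multiset_esymm, hroots]

lemma charpoly_smul_sub_smul_one (hH : H.IsHermitian) (c t : ℝ) :
    (c • H - t • 1).charpoly = ∏ i, (X - C (c * hH.eigenvalues i - t)) := by
  have hdiag : c • H - t • 1 = Unitary.conjStarAlgAut ℝ _ hH.eigenvectorUnitary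
      (diagonal fun i => c * hH.eigenvalues i - t) := by
    conv_lhs => rw [hH.spectral_theorem]
    rw [← map_smul, ← map_one (Unitary.conjStarAlgAut ℝ _ hH.eigenvectorUnitary), ← map_smul,
      ← map_sub]
    congr 1
    ext i j
    by_cases hij : i = j <;> simp [hij]
  rw [hdiag, Unitary.conjStarAlgAut_apply, charpoly_mul_comm, ← mul_assoc]
  simp [charpoly_diagonal]

end Matrix.IsHermitian

theorem Sk_smul_sub_smul_one {n k : ℕ} (hkn : k ≤ n) {H : Matrix (Fin n) (Fin n) ℝ}
    (hH : H.IsHermitian) (c t : ℝ) :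
    Sk n k (c • H - t • 1) =
      c ^ k * Sk n k H -
        ∑ l ∈ Finset.Icc 1 k,
          ((n - k + l).choose l : ℝ) * Sk n (k - l) (c • H - t • 1) * t ^ l := by
  set μ : Fin n → ℝ := fun i => c * hH.eigenvalues i - t
  have hA : ∀ m, Sk n m (c • H - t • 1) = esymm n m μ :=
    ((hH.smul (.all c)).sub (Matrix.isHermitian_one.smul (.all t))).Sk_eq_esymm_of_charpoly_eq
      (hH.charpoly_smul_sub_smul_one c t)
  have hexpand : c ^ k * Sk n k H = esymm n k μ +
      ∑ l ∈ Finset.Icc 1 k, ((n - k + l).choose l : ℝ) * esymm n (k - l) μ * t ^ l := by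
    have hshift : (fun i => c * hH.eigenvalues i) = fun i => μ i + t := by
      ext; simp [μ]
    rw [hH.Sk_eq_esymm_eigenvalues, ← esymm.const_mul, hshift, esymm.add_const hkn,
      Finset.range_eq_Ico, Finset.sum_eq_sum_Ico_succ_bot k.succ_pos, Nat.succ_eq_add_one,
      Finset.Ico_add_one_right_eq_Icc]
    simp
  simp only [hA, hexpand, add_sub_cancel_right]

section Calculus

variable {n : ℕ} {u : E n → ℝ} {x : E n}

lemma hess_apply_eq_fderiv_fderiv (hd : DifferentiableAt ℝ (fderiv ℝ u) x) (i j : Fin n) :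
    hess u x i j =
      fderiv ℝ (fderiv ℝ u) x (EuclideanSpace.single i 1) (EuclideanSpace.single j 1) := by
  change fderiv ℝ (fun y => fderiv ℝ u y (EuclideanSpace.single j 1)) x _ = _
  rw [fderiv_clm_apply hd (differentiableAt_const _)]
  simp

lemma isHermitian_hess (hu : ContDiffAt ℝ 2 u x) : (hess u x).IsHermitian := by
  have hd : DifferentiableAt ℝ (fderiv ℝ u) x :=
    (hu.fderiv_right (m := 1) (by norm_num)).differentiableAt one_ne_zero
  have hsymm := hu.isSymmSndFDerivAt (by simp [minSmoothness_of_isRCLikeNormedField])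
  ext i j
  rw [Matrix.conjTranspose_apply, star_trivial, hess_apply_eq_fderiv_fderiv hd,
    hess_apply_eq_fderiv_fderiv hd]
  exact hsymm _ _

lemma Amat_eq_smul_hess_sub_smul_one (u : E n → ℝ) (x : E n) :
    Amat u x = u x • hess u x - ((1 / 2) * gradsq u x) • 1 := by
  ext i j
  by_cases hij : i = j <;> simp [Amat, hij]

end Calculus

theorem stmt6_general (n k : ℕ) (hkn : k ≤ n)
    (Ω : Set (E n)) (hΩ : IsOpen Ω) (v : E n → ℝ)
    (hv : ContDiffOn ℝ 2 v Ω) :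
    ∀ x ∈ Ω,
      Sk n k (Amat v x) =
        v x ^ k * Sk n k (hess v x) -
          ∑ l ∈ Finset.Icc 1 k,
            (((n - k + l).factorial : ℝ) / ((l.factorial : ℝ) * ((n - k).factorial : ℝ))) *
              Sk n (k - l) (Amat v x) * ((1 / 2) * gradsq v x) ^ l := by
  intro x hx
  have hH := isHermitian_hess (hv.contDiffAt (hΩ.mem_nhds hx))
  rw [Amat_eq_smul_hess_sub_smul_one, Sk_smul_sub_smul_one hkn hH]
  refine congrArg _ (Finset.sum_congr rfl fun l _ => ?_)
  rw [Nat.cast_choose ℝ (Nat.le_add_left l (n - k)), Nat.add_sub_cancel]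

theorem stmt6 (n k : ℕ) (hk : 1 ≤ k) (hkn : k ≤ n)
    (Ω : Set (E n)) (hΩ : IsOpen Ω) (v : E n → ℝ)
    (hv : ContDiffOn ℝ 2 v Ω) (hvpos : ∀ x ∈ Ω, 0 < v x) :
    ∀ x ∈ Ω,
      Sk n k (Amat v x) =
        v x ^ k * Sk n k (hess v x) -
          ∑ l ∈ Finset.Icc 1 k,
            (((n - k + l).factorial : ℝ) / ((l.factorial : ℝ) * ((n - k).factorial : ℝ))) *
              Sk n (k - l) (Amat v x) * ((1 / 2) * gradsq v x) ^ l :=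
  stmt6_general n k hkn Ω hΩ v hv
end
end

section
/- Let η : ℝⁿ → ℝ be defined by η(x) = C for |x| ≤ 1 and η(x) = (|x| − 1)³ + C for 1 ≤ |x| ≤ 2. Then η is C² on the ball B₂ = {|x| < 2}, and for every constant C > 3 the matrix A_{ij}(η) = η·η_{ij} − (1/2)|∇η|²δ_{ij} is positive semidefinite at every point of B₂. -/
open scoped BigOperators Classical
open MeasureTheory

noncomputable section

open Matrix

/-! Write η(x) = f(‖x‖²) with f(s) = (√(max s 1) - 1)³ + C. Both one-sided derivatives of f and
of f' vanish at s = 1, so f is C², and for such a radial function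
A(η) = 4 f f'' · x xᵀ + (2 f f' - 2 f'² ‖x‖²) · Id. With r = ‖x‖ ∈ [1, 2) the second coefficient
is 3(r - 1)²/r · ((r - 1)³ + C - (3/2) r (r - 1)²), nonnegative because (3/2) r (r - 1)² < 3 < C. -/

theorem hasDerivAt_comp_max_const {h h' : ℝ → ℝ} {a : ℝ}
    (hh : ∀ t, a ≤ t → HasDerivAt h (h' t) t) (ha : h' a = 0) (s : ℝ) :
    HasDerivAt (fun s => h (max s a)) (h' (max s a)) s := by
  rcases lt_trichotomy s a with hs | rfl | hs
  · rw [max_eq_right hs.le, ha]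
    apply (hasDerivAt_const s (h a)).congr_of_eventuallyEq
    filter_upwards [Iio_mem_nhds hs] with t ht
    rw [max_eq_right ht.le]
  · rw [max_self, ha]
    have hle : HasDerivWithinAt (fun t => h (max t s)) 0 (Set.Iic s) s :=
      (hasDerivWithinAt_const s _ (h s)).congr (fun t ht => by rw [max_eq_right ht])
        (by rw [max_self])
    have hge : HasDerivWithinAt (fun t => h (max t s)) 0 (Set.Ici s) s :=
      (ha ▸ (hh s le_rfl).hasDerivWithinAt).congr (fun t ht => by rw [max_eq_left ht])
        (by rw [max_self])
    simpa using hle.union hge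
  · rw [max_eq_left hs.le]
    apply (hh s hs.le).congr_of_eventuallyEq
    filter_upwards [Ioi_mem_nhds hs] with t ht
    rw [max_eq_left ht.le]

theorem contDiff_two_of_hasDerivAt {f f' f'' : ℝ → ℝ} (hf : ∀ s, HasDerivAt f (f' s) s)
    (hf' : ∀ s, HasDerivAt f' (f'' s) s) (hf'' : Continuous f'') : ContDiff ℝ 2 f := by
  have hd : deriv f = f' := funext fun s => (hf s).deriv
  have hd' : deriv f' = f'' := funext fun s => (hf' s).deriv
  rw [show (2 : WithTop ℕ∞) = 1 + 1 from rfl, contDiff_succ_iff_deriv, hd,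
    contDiff_one_iff_deriv, hd']
  exact ⟨fun s => (hf s).differentiableAt, by simp, fun s => (hf' s).differentiableAt, hf''⟩

-- `(r - 1)³ + C` in the variable `t = r²`; `η x = cubicProfile C (max (‖x‖ ^ 2) 1)`.
def cubicProfile (C t : ℝ) : ℝ := (√t - 1) ^ 3 + C

def cubicProfileDeriv (t : ℝ) : ℝ := 3 * (√t - 1) ^ 2 / (2 * √t)

def cubicProfileDeriv2 (t : ℝ) : ℝ := 3 * (√t - 1) * (√t + 1) / (4 * √t ^ 3)

theorem hasDerivAt_cubicProfile (C : ℝ) {t : ℝ} (ht : 0 < t) :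
    HasDerivAt (cubicProfile C) (cubicProfileDeriv t) t := by
  have hr : √t ≠ 0 := (Real.sqrt_pos.2 ht).ne'
  refine ((((Real.hasDerivAt_sqrt ht.ne').sub_const 1).pow 3).add_const C).congr_deriv ?_
  rw [cubicProfileDeriv]
  field_simp
  ring

theorem hasDerivAt_cubicProfileDeriv {t : ℝ} (ht : 0 < t) :
    HasDerivAt cubicProfileDeriv (cubicProfileDeriv2 t) t := by
  have hr : 0 < √t := Real.sqrt_pos.2 ht
  have hsqrt := Real.hasDerivAt_sqrt ht.ne'
  refine ((((hsqrt.sub_const 1).pow 2).const_mul 3).div (hsqrt.const_mul 2)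
    (by positivity)).congr_deriv ?_
  rw [cubicProfileDeriv2]
  simp only [Pi.pow_apply]
  field_simp
  ring

theorem continuousOn_cubicProfileDeriv2 : ContinuousOn cubicProfileDeriv2 (Set.Ioi 0) := by
  intro t ht
  have hr : 0 < √t := Real.sqrt_pos.2 ht
  exact (ContinuousAt.div (by fun_prop) (by fun_prop) (by positivity)).continuousWithinAt

theorem cubicProfile_max_sq_one (C : ℝ) {r : ℝ} (hr : 0 ≤ r) :
    cubicProfile C (max (r ^ 2) 1) = if r ≤ 1 then C else (r - 1) ^ 3 + C := by
  split_ifs with h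
  · rw [max_eq_right (pow_le_one₀ hr h), cubicProfile, Real.sqrt_one]
    ring
  · rw [max_eq_left (one_le_pow₀ (not_le.1 h).le), cubicProfile, Real.sqrt_sq hr]

theorem cubicProfileDeriv2_nonneg {t : ℝ} (ht : 1 ≤ t) : 0 ≤ cubicProfileDeriv2 t := by
  have hr : 1 ≤ √t := Real.one_le_sqrt.2 ht
  unfold cubicProfileDeriv2
  apply div_nonneg <;> nlinarith [pow_pos (by linarith : (0:ℝ) < √t) 3]

theorem cubicProfile_mul_deriv_sub_nonneg {C t : ℝ} (hC : 3 < C) (ht1 : 1 ≤ t) (ht4 : t < 4) :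
    0 ≤ 2 * cubicProfile C t * cubicProfileDeriv t - 2 * cubicProfileDeriv t ^ 2 * t := by
  obtain ⟨r, hr0, rfl⟩ : ∃ r, 0 ≤ r ∧ r ^ 2 = t :=
    ⟨√t, Real.sqrt_nonneg t, Real.sq_sqrt (by linarith)⟩
  have hr1 : 1 ≤ r := by nlinarith
  have hr2 : r < 2 := by nlinarith
  have key : 2 * cubicProfile C (r ^ 2) * cubicProfileDeriv (r ^ 2)
      - 2 * cubicProfileDeriv (r ^ 2) ^ 2 * r ^ 2
      = 3 * (r - 1) ^ 2 / r * ((r - 1) ^ 3 + C - 3 / 2 * r * (r - 1) ^ 2) := by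
    rw [cubicProfile, cubicProfileDeriv, Real.sqrt_sq hr0]
    field_simp
  rw [key]
  have : r * (r - 1) ^ 2 < 2 := by nlinarith
  apply mul_nonneg (by positivity)
  nlinarith [pow_nonneg (sub_nonneg.2 hr1) 3]

theorem HasDerivAt.hasFDerivAt_comp_norm_sq {F : Type*} [NormedAddCommGroup F]
    [InnerProductSpace ℝ F] {f : ℝ → ℝ} {f' : ℝ} {x : F} (hf : HasDerivAt f f' (‖x‖ ^ 2)) :
    HasFDerivAt (fun y => f (‖y‖ ^ 2)) ((2 * f') • innerSL ℝ x) x := by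
  refine (hf.comp_hasFDerivAt x (hasStrictFDerivAt_norm_sq x).hasFDerivAt).congr_fderiv ?_
  ext y
  simp only [_root_.smul_apply, innerSL_apply_apply, smul_eq_mul, nsmul_eq_mul]
  push_cast
  ring

section Radial

variable {n : ℕ} {f f' f'' : ℝ → ℝ}

theorem pd_comp_norm_sq (hf : ∀ s, HasDerivAt f (f' s) s) (x : E n) (j : Fin n) :
    pd (fun y => f (‖y‖ ^ 2)) j x = 2 * f' (‖x‖ ^ 2) * x j := by
  rw [pd, (hf _).hasFDerivAt_comp_norm_sq.fderiv]
  simp [EuclideanSpace.inner_single_right]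

theorem hess_comp_norm_sq (hf : ∀ s, HasDerivAt f (f' s) s) (hf' : ∀ s, HasDerivAt f' (f'' s) s)
    (x : E n) :
    hess (fun y => f (‖y‖ ^ 2)) x
      = (4 * f'' (‖x‖ ^ 2)) • vecMulVec x x
        + (2 * f' (‖x‖ ^ 2)) • (1 : Matrix (Fin n) (Fin n) ℝ) := by
  ext i j
  have hpd : (fun y => pd (fun y => f (‖y‖ ^ 2)) j y) = fun y => 2 * f' (‖y‖ ^ 2) * y j :=
    funext fun y => pd_comp_norm_sq hf y j
  have hd := (((hf' _).hasFDerivAt_comp_norm_sq (x := x)).const_mul 2).fun_mul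
    (EuclideanSpace.proj (𝕜 := ℝ) j).hasFDerivAt
  rw [hess, Matrix.of_apply, hpd, pd,
    show fderiv ℝ (fun y : E n => 2 * f' (‖y‖ ^ 2) * y j) x = _ from hd.fderiv]
  simp [EuclideanSpace.inner_single_right, Matrix.one_apply, vecMulVec_apply, eq_comm]
  ring

theorem gradsq_comp_norm_sq (hf : ∀ s, HasDerivAt f (f' s) s) (x : E n) :
    gradsq (fun y => f (‖y‖ ^ 2)) x = 4 * f' (‖x‖ ^ 2) ^ 2 * ‖x‖ ^ 2 := by
  simp only [gradsq, pd_comp_norm_sq hf]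
  simp only [EuclideanSpace.real_norm_sq_eq, Finset.mul_sum]
  exact Finset.sum_congr rfl fun i _ => by ring

theorem Amat_comp_norm_sq (hf : ∀ s, HasDerivAt f (f' s) s)
    (hf' : ∀ s, HasDerivAt f' (f'' s) s) (x : E n) :
    Amat (fun y => f (‖y‖ ^ 2)) x
      = (4 * f (‖x‖ ^ 2) * f'' (‖x‖ ^ 2)) • vecMulVec x x
        + (2 * f (‖x‖ ^ 2) * f' (‖x‖ ^ 2) - 2 * f' (‖x‖ ^ 2) ^ 2 * ‖x‖ ^ 2)
          • (1 : Matrix (Fin n) (Fin n) ℝ) := by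
  ext i j
  simp only [Amat, Matrix.of_apply, hess_comp_norm_sq hf hf', gradsq_comp_norm_sq hf]
  simp [Matrix.one_apply, vecMulVec_apply]
  split_ifs <;> ring

end Radial

theorem posSemidef_smul_vecMulVec_add_smul_one {m : Type*} [Fintype m] [DecidableEq m]
    (v : m → ℝ) {a b : ℝ} (ha : 0 ≤ a) (hb : 0 ≤ b) :
    (a • vecMulVec v v + b • (1 : Matrix m m ℝ)).PosSemidef :=
  ((posSemidef_vecMulVec_self_star v).smul ha).add (PosSemidef.one.smul hb)

theorem stmt10 (n : ℕ) (C : ℝ) (η : E n → ℝ)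
    (hη : ∀ x, η x = if ‖x‖ ≤ 1 then C else (‖x‖ - 1) ^ 3 + C) :
    ContDiffOn ℝ 2 η (Metric.ball (0 : E n) 2) ∧
      (3 < C → ∀ x ∈ Metric.ball (0 : E n) 2, (Amat η x).PosSemidef) := by
  have hη_eq : η = fun x => cubicProfile C (max (‖x‖ ^ 2) 1) :=
    funext fun x => by rw [hη, cubicProfile_max_sq_one C (norm_nonneg x)]
  have hf := hasDerivAt_comp_max_const (a := 1)
    (fun t ht => hasDerivAt_cubicProfile C (by linarith)) (by simp [cubicProfileDeriv])
  have hf' := hasDerivAt_comp_max_const (a := 1)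
    (fun t ht => hasDerivAt_cubicProfileDeriv (by linarith)) (by simp [cubicProfileDeriv2])
  have hf'' : Continuous fun s => cubicProfileDeriv2 (max s 1) :=
    continuousOn_cubicProfileDeriv2.comp_continuous (by fun_prop)
      fun s => one_pos.trans_le (le_max_right s 1)
  subst hη_eq
  refine ⟨((contDiff_two_of_hasDerivAt hf hf' hf'').comp (contDiff_norm_sq ℝ)).contDiffOn,
    fun hC x hx => ?_⟩
  rw [Amat_comp_norm_sq hf hf']
  have hx4 : ‖x‖ ^ 2 < 4 := by nlinarith [norm_nonneg x, mem_ball_zero_iff.1 hx]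
  set t := max (‖x‖ ^ 2) 1
  have ht1 : 1 ≤ t := le_max_right _ _
  refine posSemidef_smul_vecMulVec_add_smul_one _ ?_ ?_
  · have hprofile : 0 ≤ cubicProfile C t := by
      unfold cubicProfile
      nlinarith [pow_nonneg (sub_nonneg.2 (Real.one_le_sqrt.2 ht1)) 3]
    have := cubicProfileDeriv2_nonneg ht1
    positivity
  · calc 0 ≤ 2 * cubicProfile C t * cubicProfileDeriv t - 2 * cubicProfileDeriv t ^ 2 * t :=
          cubicProfile_mul_deriv_sub_nonneg hC ht1 (max_lt hx4 (by norm_num))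
      _ ≤ _ := by gcongr; exact le_max_left _ _
end
end
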